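/- For every real q with 0 < q < 1, integers α ≥ 1 and n ≥ 0, every real x ≥ 0, every odd positive integer d and Dirichlet character χ modulo d, Ẽ^χ_{n,q}(x|α) = ( [2:q] / ( [α:q]^n (1−q)^n ) ) · Σ_{j=0}^{n} C(n,j) (−1)^j q^{α j x} · Σ_{l=0}^{d−1} χ(l) q^l (−1)^l q^{α j l} / ( q^{(α j + 1)d} + 1 ). -/

import Mathlib

open scoped BigOperators

/-- `[x:q] = (q^x - 1)/(q - 1)` with real exponentiation. -/
noncomputable def qNum (q x : ℝ) : ℝ := (q ^ x - 1) / (q - 1)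

/-- Dirichlet-type weighted `q`-Euler polynomial
`Ẽ^χ_{n,q}(x|α) = [2:q] ∑_{m≥0} q^m χ(m) (-1)^m [x+m:q^α]^n`. -/
noncomputable def qEulerChi (q : ℝ) (d : ℕ) (χ : DirichletCharacter ℂ d) (α n : ℕ)
    (x : ℝ) : ℂ :=
  (qNum q 2 : ℂ) *
    ∑' m : ℕ, (q : ℂ) ^ m * χ (m : ZMod d) * (-1 : ℂ) ^ m *
      ((qNum (q ^ α) (x + (m : ℝ)) : ℝ) : ℂ) ^ n

/-!
Expanding `[x+m:q^α]^n = (1 - q^{α(x+m)})^n / (1 - q^α)^n` binomially turns the series into a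
finite combination of the series `∑ χ(m) w^m` with `w = -q^{αj+1}`. Since `χ` is `d`-periodic,
such a series is `(∑_{l<d} χ(l) w^l) / (1 - w^d)`, and as `d` is odd, `1 - w^d = q^{(αj+1)d} + 1`.
-/

open Finset

lemma qNum_pow_eq_sum (b y : ℝ) (n : ℕ) :
    qNum b y ^ n =
      (∑ j ∈ range (n + 1), (n.choose j : ℝ) * (-1) ^ j * (b ^ y) ^ j) / (1 - b) ^ n := by
  have hqNum : qNum b y = (-(b ^ y) + 1) / (1 - b) := by
    rw [qNum, ← neg_div_neg_eq]; ring_nf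
  rw [hqNum, div_pow, add_pow]
  congr 1
  refine sum_congr rfl fun j _ => ?_
  rw [neg_pow]; ring

lemma Real.pow_rpow_add_natCast_pow {q : ℝ} (hq : 0 < q) (α j m : ℕ) (x : ℝ) :
    ((q ^ α) ^ (x + m)) ^ j = q ^ ((↑(α * j) : ℝ) * x) * q ^ (α * j * m) := by
  rw [← Real.rpow_natCast q α, ← Real.rpow_mul hq.le, ← Real.rpow_natCast _ j,
    ← Real.rpow_mul hq.le, ← Real.rpow_natCast q (α * j * m), ← Real.rpow_add hq]
  push_cast; ring_nf

lemma qNum_natCast_mul_one_sub {q : ℝ} (hq : q ≠ 1) (α : ℕ) : qNum q α * (1 - q) = 1 - q ^ α := by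
  rw [qNum, Real.rpow_natCast]
  field_simp [sub_ne_zero.2 hq]
  ring

lemma tsum_mul_pow_of_periodic {K : Type*} [Field K] [TopologicalSpace K] [IsTopologicalRing K]
    [T2Space K] {f : ℕ → K} {d : ℕ} (hf : Function.Periodic f d) {w : K} (hw : w ^ d ≠ 1)
    (hs : Summable fun m => f m * w ^ m) :
    ∑' m, f m * w ^ m = (∑ l ∈ range d, f l * w ^ l) / (1 - w ^ d) := by
  have hshift : ∑' m, f (m + d) * w ^ (m + d) = w ^ d * ∑' m, f m * w ^ m := by
    rw [← tsum_mul_left]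
    exact tsum_congr fun m => by rw [hf, pow_add]; ring
  have key := hs.sum_add_tsum_nat_add d
  rw [hshift] at key
  rw [eq_div_iff (sub_ne_zero.2 hw.symm)]
  linear_combination -key

lemma DirichletCharacter.summable_mul_pow {F : Type*} [NormedField F] [CompleteSpace F] {d : ℕ}
    (χ : DirichletCharacter F d) {w : F} (hw : ‖w‖ < 1) :
    Summable fun m : ℕ => χ m * w ^ m := by
  refine .of_norm_bounded (summable_geometric_of_lt_one (norm_nonneg w) hw) fun m => ?_
  rw [norm_mul, norm_pow]
  exact mul_le_of_le_one_left (by positivity) (χ.norm_le_one _)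

lemma DirichletCharacter.periodic_natCast {R : Type*} [CommMonoidWithZero R] {d : ℕ}
    (χ : DirichletCharacter R d) : Function.Periodic (fun m : ℕ => χ m) d := fun m => by simp

lemma DirichletCharacter.tsum_mul_pow {F : Type*} [NormedField F] [CompleteSpace F] {d : ℕ}
    (hd : 0 < d) (χ : DirichletCharacter F d) {w : F} (hw : ‖w‖ < 1) :
    ∑' m : ℕ, χ m * w ^ m = (∑ l ∈ range d, χ l * w ^ l) / (1 - w ^ d) := by
  have hwd : w ^ d ≠ 1 := ne_of_apply_ne norm <| by
    rw [norm_pow, norm_one]; exact (pow_lt_one₀ (norm_nonneg _) hw hd.ne').ne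
  exact tsum_mul_pow_of_periodic χ.periodic_natCast hwd (χ.summable_mul_pow hw)

lemma mul_qNum_pow_eq_sum {q : ℝ} (hq : 0 < q) (α n m : ℕ) (x : ℝ) (a : ℂ) :
    (q : ℂ) ^ m * a * (-1) ^ m * ((qNum (q ^ α) (x + m) : ℝ) : ℂ) ^ n =
      ∑ j ∈ range (n + 1), n.choose j * (-1) ^ j * ((q ^ ((↑(α * j) : ℝ) * x) : ℝ) : ℂ) /
        (1 - (q : ℂ) ^ α) ^ n * (a * (-(q : ℂ) ^ (α * j + 1)) ^ m) := by
  rw [← Complex.ofReal_pow (qNum _ _), qNum_pow_eq_sum]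
  simp only [Real.pow_rpow_add_natCast_pow hq]
  push_cast
  rw [sum_div, mul_sum]
  exact sum_congr rfl fun j _ => by ring

theorem statement7_general (q : ℝ) (hq0 : 0 < q) (hq1 : q < 1)
    (α : ℕ) (n : ℕ) (x : ℝ)
    (d : ℕ) (hd0 : 0 < d) (hdo : Odd d) (χ : DirichletCharacter ℂ d) :
    qEulerChi q d χ α n x =
      ((qNum q 2 / (qNum q α ^ n * (1 - q) ^ n) : ℝ) : ℂ) *
        ∑ j ∈ Finset.range (n + 1),
          (n.choose j : ℂ) * (-1 : ℂ) ^ j * ((q ^ ((↑(α * j) : ℝ) * x) : ℝ) : ℂ) *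
            ∑ l ∈ Finset.range d,
              χ (l : ZMod d) * (q : ℂ) ^ l * (-1 : ℂ) ^ l * (q : ℂ) ^ (α * j * l) /
                ((q : ℂ) ^ ((α * j + 1) * d) + 1) := by
  have hw : ∀ j, ‖-(q : ℂ) ^ (α * j + 1)‖ < 1 := fun j => by
    simp only [norm_neg, norm_pow, Complex.norm_real, Real.norm_of_nonneg hq0.le]
    exact pow_lt_one₀ hq0.le hq1 (by omega)
  have hden : ∀ j, 1 - (-(q : ℂ) ^ (α * j + 1)) ^ d = (q : ℂ) ^ ((α * j + 1) * d) + 1 :=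
    fun j => by rw [hdo.neg_pow, ← pow_mul]; ring
  have hconst : ((qNum q 2 / (qNum q α ^ n * (1 - q) ^ n) : ℝ) : ℂ) =
      qNum q 2 / (1 - (q : ℂ) ^ α) ^ n := by
    rw [← mul_pow, qNum_natCast_mul_one_sub hq1.ne]; norm_cast
  unfold qEulerChi
  rw [tsum_congr fun m => mul_qNum_pow_eq_sum hq0 α n m x _,
    Summable.tsum_finsetSum fun j _ => (χ.summable_mul_pow (hw j)).mul_left _, hconst]
  simp only [tsum_mul_left, χ.tsum_mul_pow hd0 (hw _), hden, sum_div, mul_sum]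
  refine sum_congr rfl fun j _ => sum_congr rfl fun l _ => ?_
  ring

theorem statement7 (q : ℝ) (hq0 : 0 < q) (hq1 : q < 1)
    (α : ℕ) (hα : 1 ≤ α) (n : ℕ) (x : ℝ) (hx : 0 ≤ x)
    (d : ℕ) (hd0 : 0 < d) (hdo : Odd d) (χ : DirichletCharacter ℂ d) :
    qEulerChi q d χ α n x =
      ((qNum q 2 / (qNum q α ^ n * (1 - q) ^ n) : ℝ) : ℂ) *
        ∑ j ∈ Finset.range (n + 1),
          (n.choose j : ℂ) * (-1 : ℂ) ^ j * ((q ^ ((↑(α * j) : ℝ) * x) : ℝ) : ℂ) *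
            ∑ l ∈ Finset.range d,
              χ (l : ZMod d) * (q : ℂ) ^ l * (-1 : ℂ) ^ l * (q : ℂ) ^ (α * j * l) /
                ((q : ℂ) ^ ((α * j + 1) * d) + 1) :=
  statement7_general q hq0 hq1 α n x d hd0 hdo χ
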